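/- Let $h_1 \le \dots \le h_N$ be reals, $k < N$, and consider the mixing system: $v \ge h_{N-k}$ and $v + (h_i - h_{N-k}) z_i \ge h_i$ for $i > N-k$, with $z \in [0,1]^N$, $v \in \mathbb{R}$. For a chain $N \ge j_1 > \dots > j_\ell \ge N-k+1$ with $j_{\ell+1} := N-k$, the mixing inequality $v + \sum_{m=1}^\ell (h_{j_m} - h_{j_{m+1}}) z_{j_m} \ge h_{j_1}$ holds for every point with $z \in \{0,1\}^N$, but can be violated by points with fractional $z \in [0,1]^N$ satisfying the base system. -/

import Mathlib

/-! On a chain `j₀ > j₁ > ⋯ > j_ℓ = b`, argue by induction on its length. If `z (j₀) = 1` the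
first term of the sum is `h j₀ - h j₁`, which reduces the claim to the shorter chain starting
at `j₁`. If `z (j₀) = 0` the base inequality at `j₀` already gives `h j₀ ≤ v`, and the remaining
terms of the sum are nonnegative because `h` is monotone along the chain. For fractional `z`
the first case no longer pays for the whole drop `h j₀ - h j₁`, which is what the explicit
fractional point exploits. -/

section Mixing

variable {ι : Type*} [LinearOrder ι] {h : ι → ℝ} {z : ι → ℝ}

lemma sum_chain_mixing_nonneg (hmono : Monotone h) (hz : ∀ i, 0 ≤ z i) {ℓ : ℕ}
    {j : Fin (ℓ + 1) → ι} (hj : StrictAnti j) :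
    0 ≤ ∑ m : Fin ℓ, (h (j m.castSucc) - h (j m.succ)) * z (j m.castSucc) :=
  Finset.sum_nonneg fun _ _ =>
    mul_nonneg (sub_nonneg.2 (hmono (hj Fin.castSucc_lt_succ).le)) (hz _)

lemma mixing_inequality_of_binary (hmono : Monotone h) (hzbin : ∀ i, z i = 0 ∨ z i = 1)
    {v : ℝ} {b : ι} (hbase0 : h b ≤ v)
    (hbase : ∀ i, b < i → h i ≤ v + (h i - h b) * z i) :
    ∀ {ℓ : ℕ} {j : Fin (ℓ + 1) → ι}, StrictAnti j → j (Fin.last ℓ) = b →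
      h (j 0) ≤ v + ∑ m : Fin ℓ, (h (j m.castSucc) - h (j m.succ)) * z (j m.castSucc)
  | 0, j, _, hlast => by simpa [show j 0 = b from hlast] using hbase0
  | ℓ + 1, j, hj, hlast => by
    have hj' : StrictAnti (j ∘ Fin.succ) := hj.comp_strictMono Fin.strictMono_succ
    have ih := mixing_inequality_of_binary hmono hzbin hbase0 hbase hj'
      (by simpa [Fin.succ_last] using hlast)
    rw [Fin.sum_univ_succ]
    rcases hzbin (j 0) with hz0 | hz1
    · have hb : b < j 0 := by
        rw [← hlast]
        exact hj Fin.last_pos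
      have hv : h (j 0) ≤ v := by simpa [hz0] using hbase (j 0) hb
      have htail := sum_chain_mixing_nonneg (z := z) hmono
        (fun i => by rcases hzbin i with hi | hi <;> simp [hi]) hj'
      simp only [Function.comp_def, Fin.succ_castSucc] at htail
      simp only [Fin.castSucc_zero, hz0, mul_zero, zero_add]
      linarith
    · simp only [Function.comp_def, Fin.succ_castSucc] at ih
      simp only [Fin.castSucc_zero, hz1, mul_one]
      linarith

end Mixing

/-- Mixing inequalities are valid for binary points of the base mixing system, but can
be strictly violated by fractional points: concretely, for `N = 3`, `k = 2`,
`h = (0,1,2)`, the fractional point `v = 1/2`, `z₂ = 1/2`, `z₃ = 3/4` satisfies the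
base system but violates the mixing inequality for the chain `(3,2)`. -/
theorem stmt17 (N k ℓ : ℕ) (hk : k < N) (h : Fin N → ℝ) (hmono : Monotone h)
    (v : ℝ) (z : Fin N → ℝ)
    (hzbin : ∀ i, z i = 0 ∨ z i = 1)
    (hbase0 : h ⟨N - k - 1, by omega⟩ ≤ v)
    (hbase : ∀ i : Fin N, N - k < (i : ℕ) + 1 →
      h i ≤ v + (h i - h ⟨N - k - 1, by omega⟩) * z i)
    (j : Fin (ℓ + 1) → Fin N)
    (hdec : ∀ m : Fin ℓ, (j m.succ : ℕ) < (j m.castSucc : ℕ))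
    (hlast : j (Fin.last ℓ) = ⟨N - k - 1, by omega⟩) :
    (h (j 0) ≤ v + ∑ m : Fin ℓ,
        (h (j m.castSucc) - h (j m.succ)) * z (j m.castSucc)) ∧
    (∃ (v' : ℝ) (z' : Fin 3 → ℝ), (∀ i, 0 ≤ z' i ∧ z' i ≤ 1) ∧
      0 ≤ v' ∧ 1 ≤ v' + (1 - 0) * z' 1 ∧ 2 ≤ v' + (2 - 0) * z' 2 ∧
      v' + (2 - 1) * z' 2 + (1 - 0) * z' 1 < 2) := by
  refine ⟨mixing_inequality_of_binary hmono hzbin hbase0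
    (fun i hi => hbase i (by rw [Fin.lt_def] at hi; simp only at hi; omega))
    (Fin.strictAnti_iff_succ_lt.2 hdec) hlast, ?_⟩
  -- both base inequalities with `z' ≠ 0` are tight at this point
  refine ⟨1 / 2, ![0, 1 / 2, 3 / 4], fun i => ?_, ?_⟩
  · fin_cases i <;> norm_num
  · simp only [Matrix.cons_val_one, Matrix.cons_val_two, Matrix.head_cons,
      Matrix.tail_cons]
    norm_num
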